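/- arXiv:2409.10144 — 3 statements merged into one kernel-verified Lean document; each statement's English description precedes it below -/
import Mathlib

section
/- Let (X_t)_{t∈ℕ} be a stochastic process over ℝ, let x_min > 0 and let T := min{t : X_t < x_min}. Suppose X_0 ≥ x_min, that X_t ≥ 0 for all t ≤ T, and that there exists δ > 0 such that for all t < T one has E[X_t − X_{t+1} | X_0,…,X_t] ≥ δ·X_t. Then E[T | X_0] ≤ (ln(X_0/x_min) + 1)/δ. -/
/-!
The potential `g x = log (x / xmin) + 1` for `x ≥ xmin` (and `0` below `xmin`) satisfies
`g a - g b ≥ (a - b) / a` for `a ≥ xmin` and `b ≥ 0`, because `log (a / b) ≥ 1 - b / a`.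
Multiplying the drift condition by `1 / X_t` on the event `{t < T}` and pulling this
`F_t`-measurable factor out of the conditional expectation, the potential of the process killed
at `T` therefore loses at least `δ P(t < T)` in expectation at step `t`. Summing over `t` gives
`δ ∑ₜ P(t < T) ≤ g X_0`, and `E[T] ≤ ∑ₜ P(t < T)`.
-/

open MeasureTheory ProbabilityTheory Real Filter
open scoped ENNReal

noncomputable section

namespace MultiplicativeDrift

open Finset

variable {Ω : Type*} {mΩ : MeasurableSpace Ω} {μ : Measure Ω}

lemma le_tsum_indicator_natCast_lt (x : ℝ≥0∞) :
    x ≤ ∑' n : ℕ, if (n : ℝ≥0∞) < x then 1 else 0 := by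
  obtain rfl | hx := eq_or_ne x ⊤
  · simp
  set m := ⌈x.toReal⌉₊
  have hlt : ∀ n < m, (n : ℝ≥0∞) < x := fun n hn => by
    rw [← ENNReal.ofReal_toReal hx, ← ENNReal.ofReal_natCast]
    exact (ENNReal.ofReal_lt_ofReal_iff_of_nonneg n.cast_nonneg).2 (Nat.lt_ceil.1 hn)
  calc x ≤ m := by
        rw [← ENNReal.ofReal_toReal hx, ← ENNReal.ofReal_natCast]
        exact ENNReal.ofReal_le_ofReal (Nat.le_ceil _)
    _ = ∑ n ∈ range m, if (n : ℝ≥0∞) < x then 1 else 0 := by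
        rw [sum_congr rfl fun n hn => if_pos (hlt n (mem_range.1 hn))]
        simp
    _ ≤ _ := ENNReal.sum_le_tsum _

lemma lintegral_le_tsum_measure_natCast_lt {T : Ω → ℝ≥0∞}
    (hT : ∀ n : ℕ, MeasurableSet {ω | (n : ℝ≥0∞) < T ω}) :
    ∫⁻ ω, T ω ∂μ ≤ ∑' n : ℕ, μ {ω | (n : ℝ≥0∞) < T ω} :=
  calc ∫⁻ ω, T ω ∂μ ≤ ∫⁻ ω, ∑' n : ℕ, {ω | (n : ℝ≥0∞) < T ω}.indicator 1 ω ∂μ :=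
        lintegral_mono fun ω => (le_tsum_indicator_natCast_lt (T ω)).trans_eq <| by
          simp [Set.indicator_apply]
    _ = ∑' n : ℕ, μ {ω | (n : ℝ≥0∞) < T ω} := by
        rw [lintegral_tsum fun n => (measurable_one.indicator (hT n)).aemeasurable]
        simp_rw [lintegral_indicator_one (hT _)]

lemma natCast_succ_le_sInf {p : ℕ → Prop} {n : ℕ} (h : ∀ s ≤ n, ¬ p s) :
    ((n + 1 : ℕ) : ℝ≥0∞) ≤ sInf {t : ℝ≥0∞ | ∃ s : ℕ, t = s ∧ p s} := by
  refine le_sInf ?_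
  rintro _ ⟨s, rfl, hs⟩
  exact Nat.cast_le.2 (Nat.succ_le_of_lt (not_le.1 fun hsn => h s hsn hs))

lemma natCast_lt_sInf_iff {p : ℕ → Prop} {n : ℕ} :
    (n : ℝ≥0∞) < sInf {t : ℝ≥0∞ | ∃ s : ℕ, t = s ∧ p s} ↔ ∀ s ≤ n, ¬ p s := by
  refine ⟨fun h s hsn hs => h.not_ge ?_, fun h => ?_⟩
  · exact (sInf_le (by exact ⟨s, rfl, hs⟩)).trans (Nat.cast_le.2 hsn)
  · exact (Nat.cast_lt.2 n.lt_succ_self).trans_le (natCast_succ_le_sInf h)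

lemma integral_mul_condExp_of_bound {m : MeasurableSpace Ω} (hm : m ≤ mΩ) [IsFiniteMeasure μ]
    {φ Y : Ω → ℝ} {C : ℝ} (hφ : StronglyMeasurable[m] φ) (hφC : ∀ ω, ‖φ ω‖ ≤ C)
    (hY : Integrable Y μ) :
    ∫ ω, φ ω * Y ω ∂μ = ∫ ω, φ ω * μ[Y | m] ω ∂μ := by
  rw [← integral_condExp hm]
  exact integral_congr_ae
    (condExp_stronglyMeasurable_mul_of_bound hm hφ hY C (.of_forall hφC))

lemma integrable_mul_and_mul_measureReal_le_integral {m : MeasurableSpace Ω} (hm : m ≤ mΩ)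
    [IsFiniteMeasure μ] {φ Y : Ω → ℝ} {s : Set Ω} {C c : ℝ} (hs : MeasurableSet[m] s)
    (hφ : StronglyMeasurable[m] φ) (hφC : ∀ ω, ‖φ ω‖ ≤ C) (hφs : ∀ ω ∉ s, φ ω = 0) (hc : 0 < c)
    (hφY : ∀ᵐ ω ∂μ, ω ∈ s → c ≤ φ ω * μ[Y | m] ω) :
    Integrable (fun ω => φ ω * Y ω) μ ∧ c * μ.real s ≤ ∫ ω, φ ω * Y ω ∂μ := by
  have hφ' : AEStronglyMeasurable[mΩ] φ μ := (hφ.mono hm).aestronglyMeasurable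
  by_cases hY : Integrable Y μ
  · refine ⟨hY.bdd_mul hφ' (.of_forall hφC), ?_⟩
    rw [integral_mul_condExp_of_bound hm hφ hφC hY, mul_comm, ← smul_eq_mul,
      ← integral_indicator_const c (hm s hs)]
    refine integral_mono_ae ((integrable_const c).indicator (hm s hs))
      (integrable_condExp.bdd_mul hφ' (.of_forall hφC)) ?_
    filter_upwards [hφY] with ω hω
    by_cases hωs : ω ∈ s
    · simpa [hωs] using hω hωs
    · simp [hωs, hφs ω hωs]
  -- without integrability the conditional expectation is `0`, so the drift forces `μ s = 0`
  have hs_null : ∀ᵐ ω ∂μ, ω ∉ s := by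
    filter_upwards [hφY] with ω hω hωs
    simpa [condExp_of_not_integrable hY] using (hω hωs).trans_lt' hc
  have hφY0 : (fun ω => φ ω * Y ω) =ᵐ[μ] 0 := by
    filter_upwards [hs_null] with ω hω
    simp [hφs ω hω]
  have hμs : μ.real s = 0 := by
    rw [measureReal_eq_zero_iff]
    exact measure_eq_zero_iff_ae_notMem.2 hs_null
  refine ⟨(integrable_zero _ _ _).congr hφY0.symm, ?_⟩
  rw [integral_congr_ae hφY0, hμs]
  simp

def driftPotential (xmin x : ℝ) : ℝ := if xmin ≤ x then log (x / xmin) + 1 else 0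

lemma driftPotential_nonneg {xmin : ℝ} (hxmin : 0 < xmin) (x : ℝ) :
    0 ≤ driftPotential xmin x := by
  unfold driftPotential
  split_ifs with hx
  · linarith [log_nonneg ((one_le_div hxmin).2 hx)]
  · exact le_rfl

lemma measurable_driftPotential (xmin : ℝ) : Measurable (driftPotential xmin) := by
  unfold driftPotential
  exact .ite measurableSet_Ici (by fun_prop) measurable_const

lemma inv_mul_sub_le_driftPotential_sub {xmin a b : ℝ} (hxmin : 0 < xmin) (ha : xmin ≤ a)
    (hb : 0 ≤ b) : a⁻¹ * (a - b) ≤ driftPotential xmin a - driftPotential xmin b := by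
  have ha₀ : 0 < a := hxmin.trans_le ha
  have hab : a⁻¹ * (a - b) = 1 - b / a := by field_simp
  unfold driftPotential
  rw [if_pos ha, hab]
  split_ifs with hbx
  · have hb₀ : 0 < b := hxmin.trans_le hbx
    have := log_le_sub_one_of_pos (div_pos hb₀ ha₀)
    rw [log_div hb₀.ne' ha₀.ne'] at this
    rw [log_div ha₀.ne' hxmin.ne', log_div hb₀.ne' hxmin.ne']
    linarith
  · linarith [log_nonneg ((one_le_div hxmin).2 ha), div_nonneg hb ha₀.le]

variable {F : Filtration ℕ mΩ} {X : ℕ → Ω → ℝ} {xmin δ : ℝ}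

def survivalSet (X : ℕ → Ω → ℝ) (xmin : ℝ) (t : ℕ) : Set Ω := {ω | ∀ s ≤ t, xmin ≤ X s ω}

def survivalPotential (X : ℕ → Ω → ℝ) (xmin : ℝ) (t : ℕ) : Ω → ℝ :=
  (survivalSet X xmin t).indicator fun ω => driftPotential xmin (X t ω)

lemma measurableSet_survivalSet (hX : StronglyAdapted F X) (t : ℕ) :
    MeasurableSet[F t] (survivalSet X xmin t) := by
  simp only [survivalSet, Set.ofPred_forall]
  exact .iInter fun s => .iInter fun hs =>
    measurableSet_le measurable_const (((hX s).mono (F.mono hs)).measurable)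

lemma stronglyMeasurable_survivalPotential (hX : StronglyAdapted F X) (t : ℕ) :
    StronglyMeasurable[F t] (survivalPotential X xmin t) :=
  ((measurable_driftPotential xmin).comp (hX t).measurable).stronglyMeasurable.indicator
    (measurableSet_survivalSet hX t)

lemma mem_survivalSet_succ {t : ℕ} {ω : Ω} :
    ω ∈ survivalSet X xmin (t + 1) ↔ ω ∈ survivalSet X xmin t ∧ xmin ≤ X (t + 1) ω := by
  refine ⟨fun h => ⟨fun s hs => h s (hs.trans t.le_succ), h _ le_rfl⟩, ?_⟩
  rintro ⟨h, hx⟩ s hs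
  rcases Nat.le_succ_iff.1 hs with hs | rfl
  exacts [h s hs, hx]

lemma survivalPotential_succ (t : ℕ) :
    survivalPotential X xmin (t + 1) =
      (survivalSet X xmin t).indicator fun ω => driftPotential xmin (X (t + 1) ω) := by
  ext ω
  by_cases ht : ω ∈ survivalSet X xmin t <;> by_cases hx : xmin ≤ X (t + 1) ω <;>
    simp [survivalPotential, driftPotential, mem_survivalSet_succ, ht, hx]

lemma survivalPotential_nonneg (hxmin : 0 < xmin) (t : ℕ) : 0 ≤ survivalPotential X xmin t :=
  Set.indicator_nonneg fun _ _ => driftPotential_nonneg hxmin _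

lemma indicator_inv_mul_sub_le_survivalPotential_sub (hxmin : 0 < xmin) {t : ℕ} {ω : Ω}
    (hnonneg : ω ∈ survivalSet X xmin t → 0 ≤ X (t + 1) ω) :
    (survivalSet X xmin t).indicator (fun ω => (X t ω)⁻¹) ω * (X t ω - X (t + 1) ω) ≤
      survivalPotential X xmin t ω - survivalPotential X xmin (t + 1) ω := by
  rw [survivalPotential_succ, survivalPotential]
  by_cases ht : ω ∈ survivalSet X xmin t
  · simpa [ht] using inv_mul_sub_le_driftPotential_sub hxmin (ht t le_rfl) (hnonneg ht)
  · simp [ht]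

lemma integrable_survivalPotential_succ_and_integral_add_le [IsFiniteMeasure μ]
    (hX : StronglyAdapted F X) (hxmin : 0 < xmin) (hδ : 0 < δ) {t : ℕ}
    (hnonneg : ∀ᵐ ω ∂μ, ω ∈ survivalSet X xmin t → 0 ≤ X (t + 1) ω)
    (hdrift : ∀ᵐ ω ∂μ, ω ∈ survivalSet X xmin t →
      δ * X t ω ≤ μ[fun ω' => X t ω' - X (t + 1) ω' | F t] ω)
    (hint : Integrable (survivalPotential X xmin t) μ) :
    Integrable (survivalPotential X xmin (t + 1)) μ ∧
      ∫ ω, survivalPotential X xmin (t + 1) ω ∂μ + δ * μ.real (survivalSet X xmin t) ≤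
        ∫ ω, survivalPotential X xmin t ω ∂μ := by
  set A := survivalSet X xmin t
  set φ : Ω → ℝ := A.indicator fun ω => (X t ω)⁻¹
  have hA : MeasurableSet[F t] A := measurableSet_survivalSet hX t
  have hφ : StronglyMeasurable[F t] φ :=
    ((hX t).measurable.inv.indicator hA).stronglyMeasurable
  have hφ_bound : ∀ ω, ‖φ ω‖ ≤ xmin⁻¹ := fun ω => by
    by_cases hω : ω ∈ A
    · have hx : xmin ≤ X t ω := hω t le_rfl
      simp only [φ, Set.indicator_of_mem hω]
      rw [norm_inv, Real.norm_of_nonneg (hxmin.le.trans hx)]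
      exact inv_anti₀ hxmin hx
    · simp [φ, hω, hxmin.le]
  have hφ_drift : ∀ᵐ ω ∂μ, ω ∈ A → δ ≤ φ ω * μ[fun ω' => X t ω' - X (t + 1) ω' | F t] ω := by
    filter_upwards [hdrift] with ω hω hωA
    have hx₀ : 0 < X t ω := hxmin.trans_le (hωA t le_rfl)
    simp only [φ, Set.indicator_of_mem hωA]
    rw [inv_mul_eq_div, le_div_iff₀ hx₀]
    exact hω hωA
  obtain ⟨hφY_int, hδ_le⟩ := integrable_mul_and_mul_measureReal_le_integral (F.le t) hA hφ
    hφ_bound (fun ω hω => Set.indicator_of_notMem hω _) hδ hφ_drift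
  have hdecr : ∀ᵐ ω ∂μ, survivalPotential X xmin (t + 1) ω ≤
      survivalPotential X xmin t ω - φ ω * (X t ω - X (t + 1) ω) := by
    filter_upwards [hnonneg] with ω hω
    linarith [indicator_inv_mul_sub_le_survivalPotential_sub hxmin hω]
  have hint_succ : Integrable (survivalPotential X xmin (t + 1)) μ := by
    refine (hint.sub hφY_int).mono' ?_ ?_
    · exact ((stronglyMeasurable_survivalPotential hX _).mono (F.le _)).aestronglyMeasurable
    · filter_upwards [hdecr] with ω hω
      rwa [Real.norm_of_nonneg (survivalPotential_nonneg hxmin _ _)]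
  refine ⟨hint_succ, ?_⟩
  have := integral_mono_ae hint_succ (hint.sub hφY_int) hdecr
  simp only [Pi.sub_apply] at this
  rw [integral_sub hint hφY_int] at this
  linarith

lemma integrable_survivalPotential_and_integral_add_sum_le [IsFiniteMeasure μ]
    (hX : StronglyAdapted F X) (hxmin : 0 < xmin) (hδ : 0 < δ)
    (hnonneg : ∀ t, ∀ᵐ ω ∂μ, ω ∈ survivalSet X xmin t → 0 ≤ X (t + 1) ω)
    (hdrift : ∀ t, ∀ᵐ ω ∂μ, ω ∈ survivalSet X xmin t →
      δ * X t ω ≤ μ[fun ω' => X t ω' - X (t + 1) ω' | F t] ω)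
    (hint : Integrable (survivalPotential X xmin 0) μ) (n : ℕ) :
    Integrable (survivalPotential X xmin n) μ ∧
      ∫ ω, survivalPotential X xmin n ω ∂μ + δ * ∑ t ∈ range n, μ.real (survivalSet X xmin t) ≤
        ∫ ω, survivalPotential X xmin 0 ω ∂μ := by
  induction n with
  | zero => simp [hint]
  | succ n ih =>
    obtain ⟨hint_n, hle⟩ := ih
    obtain ⟨hint_succ, hstep⟩ := integrable_survivalPotential_succ_and_integral_add_le hX hxmin hδ
      (hnonneg n) (hdrift n) hint_n
    refine ⟨hint_succ, ?_⟩
    rw [sum_range_succ]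
    linarith

lemma tsum_measure_survivalSet_le [IsFiniteMeasure μ]
    (hX : StronglyAdapted F X) (hxmin : 0 < xmin) (hδ : 0 < δ)
    (hnonneg : ∀ t, ∀ᵐ ω ∂μ, ω ∈ survivalSet X xmin t → 0 ≤ X (t + 1) ω)
    (hdrift : ∀ t, ∀ᵐ ω ∂μ, ω ∈ survivalSet X xmin t →
      δ * X t ω ≤ μ[fun ω' => X t ω' - X (t + 1) ω' | F t] ω)
    (hint : Integrable (survivalPotential X xmin 0) μ) :
    ∑' t, μ (survivalSet X xmin t) ≤
      ENNReal.ofReal ((∫ ω, survivalPotential X xmin 0 ω ∂μ) / δ) := by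
  refine ENNReal.tsum_le_of_sum_range_le fun n => ?_
  have hle := (integrable_survivalPotential_and_integral_add_sum_le hX hxmin hδ hnonneg hdrift
    hint n).2
  have hpos := integral_nonneg (μ := μ) (survivalPotential_nonneg (X := X) hxmin n)
  rw [sum_congr rfl fun t _ => (ofReal_measureReal (μ := μ) (s := survivalSet X xmin t)).symm,
    ← ENNReal.ofReal_sum_of_nonneg fun _ _ => measureReal_nonneg]
  refine ENNReal.ofReal_le_ofReal ((le_div_iff₀ hδ).2 ?_)
  linarith

end MultiplicativeDrift

open MultiplicativeDrift in
/-- Multiplicative drift theorem, expectation version: if `(X_t)` is a nonnegative real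
stochastic process starting deterministically at `x0 ≥ xmin > 0`, `T` is the first hitting time
of `(-∞, xmin)`, and the drift conditioned on the history `X_0, …, X_t` satisfies
`E[X_t − X_{t+1} | X_0, …, X_t] ≥ δ X_t` whenever `t < T`,
then `E[T | X_0] ≤ (ln(X_0/xmin) + 1)/δ`. -/
theorem stmt0 {Ω : Type*} [MeasurableSpace Ω] (μ : Measure Ω) [IsProbabilityMeasure μ]
    (X : ℕ → Ω → ℝ) (hX : ∀ t, StronglyMeasurable (X t))
    (xmin : ℝ) (hxmin : 0 < xmin) (x0 : ℝ) (hx0 : xmin ≤ x0)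
    (hX0 : ∀ ω, X 0 ω = x0)
    (T : Ω → ℝ≥0∞)
    (hT : ∀ ω, T ω = sInf {t : ℝ≥0∞ | ∃ s : ℕ, t = (s : ℝ≥0∞) ∧ X s ω < xmin})
    (hnonneg : ∀ᵐ ω ∂μ, ∀ t : ℕ, (t : ℝ≥0∞) ≤ T ω → 0 ≤ X t ω)
    (δ : ℝ) (hδ : 0 < δ)
    (hdrift : ∀ t : ℕ, ∀ᵐ ω ∂μ, (t : ℝ≥0∞) < T ω →
      δ * X t ω ≤ (μ[fun ω' => X t ω' - X (t + 1) ω' | Filtration.natural X hX t]) ω) :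
    ∫⁻ ω, T ω ∂μ ≤ ENNReal.ofReal ((Real.log (x0 / xmin) + 1) / δ) := by
  have hadapted := Filtration.stronglyAdapted_natural hX
  have hlt_T : ∀ (t : ℕ) ω, (t : ℝ≥0∞) < T ω ↔ ω ∈ survivalSet X xmin t := fun t ω => by
    simp [hT, natCast_lt_sInf_iff, survivalSet]
  have hpot₀ : survivalPotential X xmin 0 = fun _ => log (x0 / xmin) + 1 := by
    ext ω
    simp [survivalPotential, survivalSet, driftPotential, hX0, hx0]
  have hnonneg_succ : ∀ t, ∀ᵐ ω ∂μ, ω ∈ survivalSet X xmin t → 0 ≤ X (t + 1) ω := fun t => by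
    filter_upwards [hnonneg] with ω hω hωt
    exact hω _ ((hT ω).symm ▸ natCast_succ_le_sInf fun s hs => not_lt.2 (hωt s hs))
  have hdrift_survival := fun t => (hdrift t).mono fun ω hω hωt => hω ((hlt_T t ω).2 hωt)
  calc ∫⁻ ω, T ω ∂μ ≤ ∑' t : ℕ, μ {ω | (t : ℝ≥0∞) < T ω} :=
        lintegral_le_tsum_measure_natCast_lt fun t => by
          simpa only [hlt_T, Set.ofPred_mem_eq] using (Filtration.natural X hX).le t _
            (measurableSet_survivalSet hadapted t)
    _ = ∑' t : ℕ, μ (survivalSet X xmin t) := by simp only [hlt_T, Set.ofPred_mem_eq]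
    _ ≤ ENNReal.ofReal ((∫ ω, survivalPotential X xmin 0 ω ∂μ) / δ) :=
        tsum_measure_survivalSet_le hadapted hxmin hδ hnonneg_succ hdrift_survival
          (hpot₀ ▸ integrable_const _)
    _ = ENNReal.ofReal ((log (x0 / xmin) + 1) / δ) := by simp [hpot₀]
end
end

section
/- Let G be drawn from the M(n,k,p) random planted graph model with constants δ, p ∈ (0,1) and k ≤ ln n (with δ(n−k) an integer). Then the probability that G is NOT δ-heavy is at most exp(−δn(2p² − ln(e/δ)) + (6p+1)·ln n). In particular, if p > √((1 − ln δ)/2), then G is δ-heavy with probability 1 − e^{−Ω(n)}, i.e., the failure probability is at most e^{−cn} for some constant c > 0 and all sufficiently large n. -/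
open MeasureTheory ProbabilityTheory Real Filter
open scoped ENNReal Classical

noncomputable section

/-- Bernoulli measure on `Bool`. For `p ≤ 1` this is the Bernoulli distribution with
success probability `p`. -/
def bernoulliB (p : ℝ≥0∞) : Measure Bool := (PMF.bernoulli (min p 1).toNNReal
  (by simpa using ENNReal.toNNReal_mono ENNReal.one_ne_top (min_le_right p 1))).toMeasure

/-- The graph on `Fin n` determined by the edge indicators `ω`. -/
def graphOf {n : ℕ} (ω : Sym2 (Fin n) → Bool) : SimpleGraph (Fin n) where
  Adj u v := u ≠ v ∧ ω s(u, v) = true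
  symm := ⟨fun u v ⟨h, he⟩ => ⟨h.symm, by rwa [Sym2.eq_swap]⟩⟩
  loopless := ⟨fun u ⟨h, _⟩ => h rfl⟩

/-- In the `M(n,k,p)` model, a non-loop pair meeting the core `C` is an edge with
probability `p`; all other pairs are never edges. -/
def edgeProb {n : ℕ} (p : ℝ) (C : Finset (Fin n)) (e : Sym2 (Fin n)) : ℝ≥0∞ :=
  if ¬ e.IsDiag ∧ ∃ v ∈ e, v ∈ C then ENNReal.ofReal p else 0

/-- The `M(n,k,p)` random planted graph model with core `C` (of size `k`), as a measure on
edge indicators: all pairs are independent, and a pair is an edge with probability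
`edgeProb p C`. -/
def plantedMeasure (n : ℕ) (p : ℝ) (C : Finset (Fin n)) : Measure (Sym2 (Fin n) → Bool) :=
  Measure.pi fun e => bernoulliB (edgeProb p C e)

/-- `G` is `δ`-heavy (w.r.t. the core `C`): for every subset `S` of the fringe `V \ C` with
`|S| = δ|V \ C|`, every core vertex is adjacent to at least `ln n` vertices of `S`. -/
def DeltaHeavy {n : ℕ} (δ : ℝ) (G : SimpleGraph (Fin n)) (C : Finset (Fin n)) : Prop :=
  ∀ S ⊆ Finset.univ \ C, (S.card : ℝ) = δ * (((Finset.univ \ C : Finset (Fin n)).card : ℝ)) →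
    ∀ v ∈ C, Real.log n ≤ ((S.filter fun u => G.Adj v u).card : ℝ)

open Finset
open scoped NNReal

/-! A graph that is not `δ`-heavy has a core vertex `v` and a fringe set `S` of size
`m = δ(n - k)` in which `v` has at most `ln n` neighbours. That number of neighbours is a sum of
`m` independent Bernoulli(`p`) variables, so Hoeffding's lemma with the Chernoff parameter `4p`
bounds the probability by `n^{4p} e^{-2p²m}`. A union bound over the `k ≤ n` core vertices and
the `C(n - k, m) ≤ (e/δ)^m` sets `S` gives the estimate; the spare factor `n^{2p}` pays for the
`δk` by which `m` falls short of `δn`. The second claim holds because `ln n = o(n)`. -/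

theorem Nat.choose_le_exp_one_mul_div_pow (N m : ℕ) :
    (N.choose m : ℝ) ≤ (exp 1 * N / m) ^ m := by
  rcases Nat.eq_zero_or_pos m with rfl | hm
  · simp
  have hm' : (0 : ℝ) < m := by exact_mod_cast hm
  calc (N.choose m : ℝ) ≤ (N : ℝ) ^ m / m.factorial := Nat.choose_le_pow_div m N
    _ = (N / m : ℝ) ^ m * ((m : ℝ) ^ m / m.factorial) := by
        rw [div_pow]; field_simp
    _ ≤ (N / m : ℝ) ^ m * exp m := by gcongr; exact pow_div_factorial_le_exp _ hm'.le m
    _ = (exp 1 * N / m) ^ m := by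
        rw [← Real.exp_one_pow, ← mul_pow, mul_div_assoc, mul_comm]

namespace ProbabilityTheory

theorem measureReal_sum_le_le_exp {Ω ι : Type*} [MeasurableSpace Ω] {μ : Measure Ω}
    [IsProbabilityMeasure μ] {X : ι → Ω → ℝ} (hindep : iIndepFun X μ) {s : Finset ι}
    (hmeas : ∀ i ∈ s, AEMeasurable (X i) μ) (hX : ∀ i ∈ s, ∀ᵐ ω ∂μ, X i ω ∈ Set.Icc 0 1)
    (a : ℝ) {t : ℝ} (ht : 0 ≤ t) :
    μ.real {ω | ∑ i ∈ s, X i ω ≤ a} ≤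
      exp (t * (a - ∑ i ∈ s, μ[X i]) + #s * t ^ 2 / 8) := by
  set Y : ι → Ω → ℝ := fun i ω => μ[X i] - X i ω
  have hY : ∀ i ∈ s, HasSubgaussianMGF (Y i) (1 / 4) μ := fun i hi => by
    have := (hasSubgaussianMGF_of_mem_Icc (hmeas i hi) (hX i hi)).neg
    convert this using 1
    · ext ω; simp [Y]
    · norm_num
  have hYindep : iIndepFun (fun i => (fun x => μ[X i] - x) ∘ X i) μ :=
    hindep.comp _ fun _ => by fun_prop
  have hsum := HasSubgaussianMGF.sum_of_iIndepFun hYindep hY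
  have hset : {ω | ∑ i ∈ s, X i ω ≤ a} = {ω | ∑ i ∈ s, μ[X i] - a ≤ ∑ i ∈ s, Y i ω} := by
    ext ω
    simp only [Set.mem_setOf_eq, Y, sum_sub_distrib]
    constructor <;> intro <;> linarith
  rw [hset]
  calc _ ≤ exp (-t * (∑ i ∈ s, μ[X i] - a)) * mgf (fun ω => ∑ i ∈ s, Y i ω) μ t :=
        measure_ge_le_exp_mul_mgf _ ht (hsum.integrable_exp_mul t)
    _ ≤ exp (-t * (∑ i ∈ s, μ[X i] - a)) * exp (((∑ i ∈ s, 1 / 4 : ℝ≥0) : ℝ) * t ^ 2 / 2) := by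
        gcongr; exact hsum.mgf_le t
    _ = _ := by
        rw [← Real.exp_add, sum_const, nsmul_eq_mul]
        push_cast
        ring_nf

end ProbabilityTheory

instance (q : ℝ≥0∞) : IsProbabilityMeasure (bernoulliB q) := by
  unfold bernoulliB; infer_instance

instance (n : ℕ) (p : ℝ) (C : Finset (Fin n)) : IsProbabilityMeasure (plantedMeasure n p C) := by
  unfold plantedMeasure; infer_instance

theorem bernoulliB_ofReal_real_true {p : ℝ} (hp0 : 0 ≤ p) (hp1 : p ≤ 1) :
    (bernoulliB (ENNReal.ofReal p)).real {true} = p := by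
  rw [measureReal_def, bernoulliB, PMF.toMeasure_apply_singleton _ _ (measurableSet_singleton _)]
  refine (congrArg ENNReal.toReal (PMF.bernoulli_apply _ true)).trans ?_
  simp [min_eq_left (ENNReal.ofReal_le_one.mpr hp1), hp0]

theorem plantedMeasure_real_edge {n : ℕ} {p : ℝ} (hp0 : 0 ≤ p) (hp1 : p ≤ 1) {C : Finset (Fin n)}
    {v u : Fin n} (hv : v ∈ C) (huv : u ≠ v) :
    (plantedMeasure n p C).real {ω | ω s(v, u) = true} = p := by
  have hedge : edgeProb p C s(v, u) = ENNReal.ofReal p :=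
    if_pos ⟨by simpa using huv.symm, v, Sym2.mem_mk_left v u, hv⟩
  calc (plantedMeasure n p C).real {ω | ω s(v, u) = true}
        = (bernoulliB (edgeProb p C s(v, u))).real {true} :=
        (measurePreserving_eval (fun e => bernoulliB (edgeProb p C e)) s(v, u)
          ).measureReal_preimage (measurableSet_singleton true).nullMeasurableSet
    _ = p := by rw [hedge, bernoulliB_ofReal_real_true hp0 hp1]

theorem measureReal_card_filter_le_le_exp {n : ℕ} {p : ℝ} (hp0 : 0 ≤ p) (hp1 : p ≤ 1)
    {C : Finset (Fin n)} {v : Fin n} (hv : v ∈ C) {S : Finset (Fin n)} (hvS : v ∉ S) (a : ℝ) :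
    (plantedMeasure n p C).real {ω | (#{u ∈ S | ω s(v, u) = true} : ℝ) ≤ a} ≤
      exp (4 * p * a - 2 * p ^ 2 * #S) := by
  set X : Fin n → (Sym2 (Fin n) → Bool) → ℝ := fun u ω => if ω s(v, u) = true then 1 else 0
  have hindep : iIndepFun X (plantedMeasure n p C) :=
    (iIndepFun_pi (X := fun _ (b : Bool) => if b = true then (1 : ℝ) else 0)
      fun _ => measurable_of_finite _ |>.aemeasurable).precomp
      fun u w h => by simpa using Sym2.congr_right.mp h
  have hmean : ∀ u ∈ S, (plantedMeasure n p C)[X u] = p := fun u hu => by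
    have hX : X u = {ω | ω s(v, u) = true}.indicator 1 := by
      ext ω; simp [X, Set.indicator_apply]
    rw [hX, integral_indicator_one .of_discrete,
      plantedMeasure_real_edge hp0 hp1 hv (ne_of_mem_of_not_mem hu hvS)]
  -- `t = 4p` minimises the exponent `-t p |S| + |S| t² / 8` at `a = 0`.
  have h := measureReal_sum_le_le_exp hindep (s := S)
    (fun _ _ => (measurable_of_finite _).aemeasurable)
    (fun u _ => ae_of_all _ fun ω => by by_cases h : ω s(v, u) = true <;> simp [X, h]) a
    (t := 4 * p) (by positivity)
  rw [sum_congr rfl hmean, sum_const, nsmul_eq_mul] at h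
  simp only [X, sum_boole] at h
  convert h using 2
  ring

theorem setOf_not_deltaHeavy_subset {n : ℕ} {δ : ℝ} {C : Finset (Fin n)} {m : ℕ}
    (hm : (m : ℝ) = δ * #(univ \ C)) :
    {ω | ¬ DeltaHeavy δ (graphOf ω) C} ⊆
      ⋃ v ∈ C, ⋃ S ∈ (univ \ C).powersetCard m,
        {ω | (#{u ∈ S | ω s(v, u) = true} : ℝ) ≤ log n} := by
  intro ω hω
  simp only [Set.mem_setOf_eq, DeltaHeavy, not_forall, not_le] at hω
  obtain ⟨S, hSC, hScard, v, hv, hlt⟩ := hω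
  have hadj : {u ∈ S | (graphOf ω).Adj v u} = {u ∈ S | ω s(v, u) = true} :=
    filter_congr fun u hu => by
      have hvu : v ≠ u := fun h => (mem_sdiff.mp (hSC hu)).2 (h ▸ hv)
      simp [graphOf, hvu]
  have hSm : #S = m := by exact_mod_cast hScard.trans hm.symm
  simp only [Set.mem_iUnion, Set.mem_setOf_eq, mem_powersetCard]
  exact ⟨v, hv, S, ⟨hSC, hSm⟩, hadj ▸ hlt.le⟩

theorem measureReal_not_deltaHeavy_le {n : ℕ} {δ p : ℝ} (hp0 : 0 ≤ p) (hp1 : p ≤ 1)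
    {C : Finset (Fin n)} {m : ℕ} (hm : (m : ℝ) = δ * #(univ \ C)) :
    (plantedMeasure n p C).real {ω | ¬ DeltaHeavy δ (graphOf ω) C} ≤
      #C * (#(univ \ C)).choose m * exp (4 * p * log n - 2 * p ^ 2 * m) := by
  set μ := plantedMeasure n p C
  calc μ.real {ω | ¬ DeltaHeavy δ (graphOf ω) C}
      ≤ ∑ v ∈ C, ∑ S ∈ (univ \ C).powersetCard m,
          μ.real {ω | (#{u ∈ S | ω s(v, u) = true} : ℝ) ≤ log n} :=
        (measureReal_mono (setOf_not_deltaHeavy_subset hm) (measure_ne_top μ _)).trans <|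
          (measureReal_biUnion_finset_le _ _).trans <|
            sum_le_sum fun _ _ => measureReal_biUnion_finset_le _ _
    _ ≤ ∑ v ∈ C, ∑ S ∈ (univ \ C).powersetCard m, exp (4 * p * log n - 2 * p ^ 2 * m) := by
        gcongr with v hv S hS
        obtain ⟨hSC, rfl⟩ := mem_powersetCard.mp hS
        exact measureReal_card_filter_le_le_exp hp0 hp1 hv
          (fun hvS => (mem_sdiff.mp (hSC hvS)).2 hv) _
    _ = _ := by simp only [sum_const, card_powersetCard, nsmul_eq_mul]; ring

theorem Nat.choose_le_exp_one_div_pow {δ : ℝ} (hδ : 0 < δ) {N m : ℕ} (hm : (m : ℝ) = δ * N) :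
    (N.choose m : ℝ) ≤ (exp 1 / δ) ^ m := by
  rcases Nat.eq_zero_or_pos m with rfl | hm0
  · simp
  have hN : (N : ℝ) = m / δ := by rw [hm]; field_simp
  calc (N.choose m : ℝ) ≤ (exp 1 * N / m) ^ m := Nat.choose_le_exp_one_mul_div_pow N m
    _ = (exp 1 / δ) ^ m := by rw [hN]; field_simp

theorem card_mul_choose_mul_exp_le {δ p : ℝ} (hδ0 : 0 < δ) (hδ1 : δ ≤ 1) (hp0 : 0 ≤ p)
    (hp1 : p ≤ 1) {n k N m : ℕ} (hk : (k : ℝ) ≤ log n) (hN : (N : ℝ) = n - k)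
    (hm : (m : ℝ) = δ * N) :
    k * N.choose m * exp (4 * p * log n - 2 * p ^ 2 * m) ≤
      exp (-δ * n * (2 * p ^ 2 - log (exp 1 / δ)) + (6 * p + 1) * log n) := by
  set L := log (exp 1 / δ)
  have hL : 0 ≤ L := log_nonneg <| (one_le_div hδ0).mpr <| hδ1.trans (one_le_exp zero_le_one)
  have hkexp : (k : ℝ) ≤ exp (log n) := hk.trans <| by linarith [add_one_le_exp (log n)]
  have hchoose : (N.choose m : ℝ) ≤ exp (m * L) := by
    rw [← log_pow, exp_log (by positivity)]
    exact Nat.choose_le_exp_one_div_pow hδ0 hm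
  have hslack : δ * k * (2 * p ^ 2 - L) ≤ 2 * p * log n := by
    have hk0 : (0 : ℝ) ≤ k := k.cast_nonneg
    have hδp : δ * p ^ 2 ≤ p := by nlinarith
    calc δ * k * (2 * p ^ 2 - L) ≤ k * (2 * (δ * p ^ 2)) := by
          nlinarith [mul_nonneg (mul_nonneg hδ0.le hk0) hL]
      _ ≤ k * (2 * p) := by gcongr
      _ ≤ 2 * p * log n := by rw [mul_comm]; gcongr
  calc k * N.choose m * exp (4 * p * log n - 2 * p ^ 2 * m)
      ≤ exp (log n) * exp (m * L) * exp (4 * p * log n - 2 * p ^ 2 * m) := by gcongr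
    _ = exp (log n + m * L + (4 * p * log n - 2 * p ^ 2 * m)) := by rw [exp_add, exp_add]
    _ ≤ _ := by
        rw [exp_le_exp, hm, hN]
        linarith

theorem plantedMeasure_not_deltaHeavy_le {δ p : ℝ} (hδ0 : 0 < δ) (hδ1 : δ ≤ 1) (hp0 : 0 ≤ p)
    (hp1 : p ≤ 1) {n k : ℕ} {C : Finset (Fin n)} (hC : #C = k) (hk : (k : ℝ) ≤ log n)
    (hm : ∃ m : ℕ, (m : ℝ) = δ * ((n : ℝ) - (k : ℝ))) :
    plantedMeasure n p C {ω | ¬ DeltaHeavy δ (graphOf ω) C} ≤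
      ENNReal.ofReal (exp (-δ * n * (2 * p ^ 2 - log (exp 1 / δ)) + (6 * p + 1) * log n)) := by
  obtain ⟨m, hm⟩ := hm
  have hkn : k ≤ n := by exact_mod_cast hk.trans (log_le_self n.cast_nonneg)
  have hN : (#(univ \ C) : ℝ) = n - k := by
    rw [card_univ_sdiff, hC, Fintype.card_fin, Nat.cast_sub hkn]
  rw [← ofReal_measureReal]
  refine ENNReal.ofReal_le_ofReal <| (measureReal_not_deltaHeavy_le hp0 hp1 (hN ▸ hm)).trans ?_
  rw [hC]
  exact card_mul_choose_mul_exp_le hδ0 hδ1 hp0 hp1 hk hN (hN ▸ hm)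

theorem eventually_mul_log_le_mul (b : ℝ) {a : ℝ} (ha : 0 < a) :
    ∀ᶠ n : ℕ in atTop, b * log n ≤ a * n := by
  filter_upwards [(isLittleO_log_id_atTop.natCast_atTop.const_mul_left b).bound ha] with n hn
  simpa using (le_abs_self _).trans hn

/-- For `G` drawn from `M(n,k,p)` with constants `δ, p ∈ (0,1)` and `k ≤ ln n` (with
`δ(n−k)` an integer), the probability that `G` is not `δ`-heavy is at most
`exp(−δn(2p² − ln(e/δ)) + (6p+1)·ln n)`; in particular, if `p > √((1 − ln δ)/2)` then `G` is
`δ`-heavy with probability `1 − e^{−Ω(n)}`. -/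
theorem stmt5 (δ p : ℝ) (hδ : δ ∈ Set.Ioo (0 : ℝ) 1) (hp : p ∈ Set.Ioo (0 : ℝ) 1) :
    (∀ (n k : ℕ) (C : Finset (Fin n)), C.card = k → (k : ℝ) ≤ Real.log n →
      (∃ m : ℕ, (m : ℝ) = δ * ((n : ℝ) - (k : ℝ))) →
      plantedMeasure n p C {ω | ¬ DeltaHeavy δ (graphOf ω) C} ≤
        ENNReal.ofReal (Real.exp (-δ * n * (2 * p ^ 2 - Real.log (Real.exp 1 / δ)) +
          (6 * p + 1) * Real.log n)))
    ∧ (Real.sqrt ((1 - Real.log δ) / 2) < p →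
        ∃ c > (0 : ℝ), ∀ᶠ n : ℕ in atTop, ∀ (k : ℕ) (C : Finset (Fin n)),
          C.card = k → (k : ℝ) ≤ Real.log n →
          (∃ m : ℕ, (m : ℝ) = δ * ((n : ℝ) - (k : ℝ))) →
          plantedMeasure n p C {ω | ¬ DeltaHeavy δ (graphOf ω) C} ≤
            ENNReal.ofReal (Real.exp (-c * n))) := by
  obtain ⟨hδ0, hδ1⟩ := hδ
  obtain ⟨hp0, hp1⟩ := hp
  refine ⟨fun n k C hC hk hm => plantedMeasure_not_deltaHeavy_le hδ0 hδ1.le hp0.le hp1.le hC hk hm,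
    fun hsqrt => ?_⟩
  have hX : 0 < 2 * p ^ 2 - log (exp 1 / δ) := by
    have := lt_sq_of_sqrt_lt hsqrt
    rw [log_div (exp_ne_zero 1) hδ0.ne', log_exp]
    linarith
  set X := 2 * p ^ 2 - log (exp 1 / δ)
  refine ⟨δ * X / 2, by positivity, ?_⟩
  filter_upwards [eventually_mul_log_le_mul (6 * p + 1) (by positivity : 0 < δ * X / 2)]
    with n hn k C hC hk hm
  refine (plantedMeasure_not_deltaHeavy_le hδ0 hδ1.le hp0.le hp1.le hC hk hm).trans <|
    ENNReal.ofReal_le_ofReal <| exp_le_exp.mpr ?_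
  linarith
end
end

section
/- Let G be drawn from the M(n,k,p) model with p ∈ (0,1] and k = ω(1). Then with probability 1 − o(1) (indeed with probability at least 1 − e^{−(ln k)²}), the largest independent set of G contained in the core C has size at most (1 + 2/p)·ln k + 1. -/
open MeasureTheory ProbabilityTheory Real Filter
open scoped ENNReal Classical

noncomputable section

/-- `S` is an independent set of `G`. -/
def IsIndepSet {n : ℕ} (G : SimpleGraph (Fin n)) (S : Finset (Fin n)) : Prop :=
  ∀ u ∈ S, ∀ v ∈ S, ¬ G.Adj u v

/-- Every independent set of `G` contained in the core `C` has size at most `b`. -/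
def CoreIndepAtMost {n : ℕ} (G : SimpleGraph (Fin n)) (C : Finset (Fin n)) (b : ℝ) : Prop :=
  ∀ S ⊆ C, IsIndepSet G S → (S.card : ℝ) ≤ b

/-! A core independent set of size more than `b` contains one of size exactly `t = ⌊b⌋₊ + 1`.
A fixed `t`-subset of the core is independent with probability `(1 - p)^(t choose 2)`, so by
the union bound the bad event has probability at most
`k^t (1 - p)^(t choose 2) ≤ exp (t ln k - p t (t - 1) / 2)`.
Since `p (t - 1) > (p + 2) ln k`, the exponent is at most `-(ln k)²`. -/

instance inst_s11 (q : ℝ≥0∞) : IsProbabilityMeasure (bernoulliB q) :=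
  PMF.toMeasure.isProbabilityMeasure _

lemma bernoulliB_singleton_false (q : ℝ≥0∞) : bernoulliB q {false} = 1 - min q 1 := by
  rw [bernoulliB, PMF.toMeasure_apply_singleton _ _ (measurableSet_singleton _)]
  -- `erw`: the proof term inside `bernoulliB` bounds by `ENNReal.toNNReal 1`, not `1`
  erw [PMF.bernoulli_apply]
  simp [ENNReal.coe_toNNReal (ne_top_of_le_ne_top ENNReal.one_ne_top (min_le_right q 1))]

section Planted

variable {n : ℕ}

lemma isIndepSet_graphOf_iff (ω : Sym2 (Fin n) → Bool) (S : Finset (Fin n)) :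
    IsIndepSet (graphOf ω) S ↔ ∀ e ∈ S.offDiag.image Sym2.mk.uncurry, ω e = false := by
  simp only [IsIndepSet, graphOf, Finset.forall_mem_image, Prod.forall, Finset.mem_offDiag,
    Function.uncurry_apply_pair, and_imp, not_and, Bool.not_eq_true]
  exact ⟨fun h a b ha hb => h a ha b hb, fun h a ha b hb => h a b ha hb⟩

lemma edgeProb_of_mem_image_offDiag (p : ℝ) {C S : Finset (Fin n)} (hS : S ⊆ C)
    {e : Sym2 (Fin n)} (he : e ∈ S.offDiag.image Sym2.mk.uncurry) :
    edgeProb p C e = ENNReal.ofReal p := by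
  obtain ⟨⟨a, b⟩, hab, rfl⟩ := Finset.mem_image.1 he
  exact if_pos ⟨Finset.not_isDiag_mk_of_mem_offDiag hab,
    a, Sym2.mem_mk_left a b, hS (Finset.mem_offDiag.1 hab).1⟩

lemma plantedMeasure_isIndepSet {p : ℝ} (hp0 : 0 ≤ p) (hp1 : p ≤ 1) {C S : Finset (Fin n)}
    (hS : S ⊆ C) :
    plantedMeasure n p C {ω | IsIndepSet (graphOf ω) S} =
      ENNReal.ofReal (1 - p) ^ S.card.choose 2 := by
  have hevent : {ω | IsIndepSet (graphOf ω) S} =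
      (↑(S.offDiag.image Sym2.mk.uncurry) : Set (Sym2 (Fin n))).pi fun _ => {false} := by
    ext ω
    simp [isIndepSet_graphOf_iff]
  rw [hevent, plantedMeasure, Measure.pi_pi_finset, ← Sym2.card_image_offDiag,
    ← Finset.prod_const]
  refine Finset.prod_congr rfl fun e he => ?_
  rw [bernoulliB_singleton_false, edgeProb_of_mem_image_offDiag p hS he,
    min_eq_left (ENNReal.ofReal_le_one.2 hp1), ENNReal.ofReal_sub _ hp0, ENNReal.ofReal_one]

lemma plantedMeasure_exists_indepSet_card_eq_le {p : ℝ} (hp0 : 0 ≤ p) (hp1 : p ≤ 1)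
    (C : Finset (Fin n)) (t : ℕ) :
    plantedMeasure n p C {ω | ∃ S ⊆ C, S.card = t ∧ IsIndepSet (graphOf ω) S} ≤
      C.card.choose t * ENNReal.ofReal (1 - p) ^ t.choose 2 := by
  have hunion : {ω | ∃ S ⊆ C, S.card = t ∧ IsIndepSet (graphOf ω) S} =
      ⋃ S ∈ C.powersetCard t, {ω | IsIndepSet (graphOf ω) S} := by
    ext ω
    simp [Finset.mem_powersetCard, and_assoc]
  calc _ ≤ ∑ S ∈ C.powersetCard t, plantedMeasure n p C {ω | IsIndepSet (graphOf ω) S} :=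
        hunion ▸ measure_biUnion_finset_le _ _
    _ = ∑ _S ∈ C.powersetCard t, ENNReal.ofReal (1 - p) ^ t.choose 2 := by
        refine Finset.sum_congr rfl fun S hS => ?_
        obtain ⟨hSC, rfl⟩ := Finset.mem_powersetCard.1 hS
        exact plantedMeasure_isIndepSet hp0 hp1 hSC
    _ = _ := by rw [Finset.sum_const, Finset.card_powersetCard, nsmul_eq_mul]

end Planted

lemma exists_indepSet_card_eq_floor_add_one {n : ℕ} {G : SimpleGraph (Fin n)}
    {C : Finset (Fin n)} {b : ℝ} (hb : 0 ≤ b) (h : ¬ CoreIndepAtMost G C b) :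
    ∃ S ⊆ C, S.card = ⌊b⌋₊ + 1 ∧ IsIndepSet G S := by
  simp only [CoreIndepAtMost, not_forall, not_le] at h
  obtain ⟨S, hSC, hSind, hbS⟩ := h
  obtain ⟨T, hTS, hT⟩ := Finset.exists_subset_card_eq ((Nat.floor_lt hb).2 hbS)
  exact ⟨T, hTS.trans hSC, hT, fun u hu v hv => hSind u (hTS hu) v (hTS hv)⟩

lemma pow_le_exp_mul_log {x : ℝ} (hx : 0 ≤ x) (t : ℕ) : x ^ t ≤ exp (t * log x) := by
  rcases hx.eq_or_lt with rfl | hx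
  · cases t <;> simp
  · rw [exp_nat_mul, exp_log hx]

lemma one_sub_pow_le_exp_neg_mul {p : ℝ} (hp : p ≤ 1) (m : ℕ) :
    (1 - p) ^ m ≤ exp (-(p * m)) :=
  calc (1 - p) ^ m ≤ exp (-p) ^ m := pow_le_pow_left₀ (by linarith) (one_sub_le_exp_neg p) m
    _ = exp (-(p * m)) := by rw [← exp_nat_mul]; ring_nf

lemma mul_sub_mul_choose_two_le_neg_sq {p L : ℝ} (hp : 0 < p) (hL : 0 ≤ L) {t : ℕ}
    (ht : (1 + 2 / p) * L + 1 < t) :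
    t * L - p * t.choose 2 ≤ -L ^ 2 := by
  have hpt : (p + 2) * L < p * (t - 1) := by
    have := mul_lt_mul_of_pos_left (show (1 + 2 / p) * L < t - 1 by linarith) hp
    rwa [← mul_assoc, mul_add, mul_one, mul_div_cancel₀ _ hp.ne'] at this
  rw [Nat.cast_choose_two]
  nlinarith [mul_le_mul_of_nonneg_left hpt.le (Nat.cast_nonneg t : (0 : ℝ) ≤ t),
    mul_nonneg hL (show 0 ≤ p * t - 2 * L by nlinarith)]

lemma natCast_pow_mul_one_sub_pow_choose_two_le {p : ℝ} (hp0 : 0 < p) (hp1 : p ≤ 1) (K : ℕ)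
    {t : ℕ} (ht : (1 + 2 / p) * log K + 1 < t) :
    (K : ℝ) ^ t * (1 - p) ^ t.choose 2 ≤ exp (-log K ^ 2) :=
  calc (K : ℝ) ^ t * (1 - p) ^ t.choose 2 ≤ exp (t * log K) * exp (-(p * t.choose 2)) :=
        mul_le_mul (pow_le_exp_mul_log K.cast_nonneg t) (one_sub_pow_le_exp_neg_mul hp1 _)
          (pow_nonneg (by linarith) _) (exp_nonneg _)
    _ = exp (t * log K - p * t.choose 2) := by rw [← exp_add, sub_eq_add_neg]
    _ ≤ exp (-log K ^ 2) :=
        exp_le_exp.2 (mul_sub_mul_choose_two_le_neg_sq hp0 (log_natCast_nonneg K) ht)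

lemma plantedMeasure_not_coreIndepAtMost_le {n : ℕ} {p : ℝ} (hp : p ∈ Set.Ioc (0 : ℝ) 1)
    (C : Finset (Fin n)) :
    plantedMeasure n p C
        {ω | ¬ CoreIndepAtMost (graphOf ω) C ((1 + 2 / p) * log C.card + 1)} ≤
      ENNReal.ofReal (exp (-log C.card ^ 2)) := by
  obtain ⟨hp0, hp1⟩ := hp
  set b := (1 + 2 / p) * log C.card + 1
  have hb : 0 ≤ b := add_nonneg (mul_nonneg (by positivity) (log_natCast_nonneg _)) zero_le_one
  set t := ⌊b⌋₊ + 1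
  calc _ ≤ plantedMeasure n p C {ω | ∃ S ⊆ C, S.card = t ∧ IsIndepSet (graphOf ω) S} :=
        measure_mono fun ω hω => exists_indepSet_card_eq_floor_add_one hb hω
    _ ≤ C.card.choose t * ENNReal.ofReal (1 - p) ^ t.choose 2 :=
        plantedMeasure_exists_indepSet_card_eq_le hp0.le hp1 C t
    _ ≤ ENNReal.ofReal ((C.card : ℝ) ^ t * (1 - p) ^ t.choose 2) := by
        rw [ENNReal.ofReal_mul (by positivity),
          ENNReal.ofReal_pow (sub_nonneg.2 hp1) (t.choose 2), ← ENNReal.ofReal_natCast]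
        gcongr
        exact_mod_cast Nat.choose_le_pow _ _
    _ ≤ _ := ENNReal.ofReal_le_ofReal <| natCast_pow_mul_one_sub_pow_choose_two_le hp0 hp1 _
        (by exact_mod_cast Nat.lt_floor_add_one b)

lemma tendsto_ofReal_exp_neg_log_sq {ι : Type*} {l : Filter ι} {k : ι → ℕ}
    (hk : Tendsto k l atTop) :
    Tendsto (fun i => ENNReal.ofReal (exp (-log (k i) ^ 2))) l (nhds 0) := by
  have hlog : Tendsto (fun i => log (k i)) l atTop :=
    tendsto_log_atTop.comp (tendsto_natCast_atTop_atTop.comp hk)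
  have hexp : Tendsto (fun i => exp (-log (k i) ^ 2)) l (nhds 0) :=
    tendsto_exp_atBot.comp <|
      tendsto_neg_atTop_atBot.comp ((tendsto_pow_atTop two_ne_zero).comp hlog)
  simpa using ENNReal.tendsto_ofReal hexp

/-- For `G` drawn from `M(n,k,p)` with `p ∈ (0,1]` and `k = k(n) = ω(1)`, with probability
`1 − o(1)` (indeed, eventually with probability at least `1 − e^{−(ln k)²}`), the largest
independent set of `G` contained in the core has size at most `(1 + 2/p)·ln k + 1`. -/
theorem stmt11 (p : ℝ) (hp : p ∈ Set.Ioc (0 : ℝ) 1)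
    (k : ℕ → ℕ) (hk : Tendsto k atTop atTop)
    (C : ∀ n : ℕ, Finset (Fin n)) (hC : ∀ n, (C n).card = k n) :
    (∀ᶠ n : ℕ in atTop,
      plantedMeasure n p (C n)
          {ω | ¬ CoreIndepAtMost (graphOf ω) (C n) ((1 + 2 / p) * Real.log (k n) + 1)} ≤
        ENNReal.ofReal (Real.exp (-(Real.log (k n)) ^ 2)))
    ∧ Tendsto
        (fun n : ℕ => plantedMeasure n p (C n)
          {ω | ¬ CoreIndepAtMost (graphOf ω) (C n) ((1 + 2 / p) * Real.log (k n) + 1)})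
        atTop (nhds 0) := by
  have hbound : ∀ n, plantedMeasure n p (C n)
      {ω | ¬ CoreIndepAtMost (graphOf ω) (C n) ((1 + 2 / p) * Real.log (k n) + 1)} ≤
        ENNReal.ofReal (Real.exp (-(Real.log (k n)) ^ 2)) := fun n => by
    rw [← hC n]
    exact plantedMeasure_not_coreIndepAtMost_le hp (C n)
  exact ⟨Eventually.of_forall hbound, tendsto_of_tendsto_of_tendsto_of_le_of_le
    tendsto_const_nhds (tendsto_ofReal_exp_neg_log_sq hk) (fun _ => zero_le) hbound⟩
end
end
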